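/- arXiv:2110.06539 — 5 statements merged into one kernel-verified Lean document; each statement's English description precedes it below -/
import Mathlib

section
/- (Robustness of the mean policy.) Assume ρe ≡ ρo, let π* be a value-maximizing policy, and assume the ambiguity set Π₀(π*) is finite and nonempty. Write d^π(s,a,x) = ρo(x) d^π(s,a|x), and define the mean policy π̄(a|s,x) = (Σ_{π∈Π₀(π*)} d^π(s,a,x)) / (Σ_{π∈Π₀(π*)} Σ_{a'} d^π(s,a',x)) at every (s,x) where the denominator is positive (arbitrary elsewhere). Let α* = |Π*_M ∩ Π₀(π*)| / |Π₀(π*)|, where Π*_M is the set of value-maximizing policies. Then v(π̄) ≥ α* · v* + (1 − α*) · min_{π ∈ Π₀(π*)} v(π), where v* = max_π v(π). -/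
open scoped BigOperators

/-- `p` is a probability mass function on a finite type. -/
def IsProb {Z : Type*} [Fintype Z] (p : Z → ℝ) : Prop :=
  (∀ z, 0 ≤ p z) ∧ ∑ z, p z = 1

section CMDP

variable {S X A : Type*} [Fintype S] [Fintype X] [Fintype A]

/-- A Markovian stationary policy: a distribution over actions for each state–context pair. -/
def IsPolicy (π : S → X → A → ℝ) : Prop :=
  ∀ s x, IsProb (π s x)

/-- The deterministic policy induced by an action map `f`. -/
def detPolicy [DecidableEq A] (f : S → X → A) : S → X → A → ℝ :=
  fun s x a => if a = f s x then 1 else 0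

/-- A policy is deterministic if it is induced by an action map. -/
def IsDet [DecidableEq A] (π : S → X → A → ℝ) : Prop :=
  ∃ f : S → X → A, π = detPolicy f

/-- The `t`-step state distribution of the Markov chain induced by policy `π` in context `x`,
starting from `s₀ ∼ ν(·|x)`. -/
noncomputable def stateDist (P : S → A → X → S → ℝ) (ν : X → S → ℝ)
    (π : S → X → A → ℝ) (x : X) : ℕ → S → ℝ
  | 0 => fun s => ν x s
  | (t+1) => fun s' => ∑ s, ∑ a, stateDist P ν π x t s * π s x a * P s a x s'

/-- The per-context (discounted) stationary distribution
`d^π(s,a|x) = (1−γ) Σ_t γ^t P^π(s_t = s, a_t = a | x)`. -/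
noncomputable def dCtx (γ : ℝ) (P : S → A → X → S → ℝ) (ν : X → S → ℝ)
    (π : S → X → A → ℝ) (x : X) (s : S) (a : A) : ℝ :=
  (1 - γ) * ∑' t : ℕ, γ ^ t * (stateDist P ν π x t s * π s x a)

/-- Marginalized stationary distribution `d_ρ^π(s,a) = E_{x∼ρ}[d^π(s,a|x)]`. -/
noncomputable def dMarg (γ : ℝ) (P : S → A → X → S → ℝ) (ν : X → S → ℝ)
    (ρ : X → ℝ) (π : S → X → A → ℝ) (s : S) (a : A) : ℝ :=
  ∑ x, ρ x * dCtx γ P ν π x s a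

/-- The `ρ`-marginalized value `v_ρ(π) = Σ_{x,s,a} ρ(x) d^π(s,a|x) r(s,a,x)`. -/
noncomputable def val (γ : ℝ) (P : S → A → X → S → ℝ) (ν : X → S → ℝ)
    (ρ : X → ℝ) (r : S → A → X → ℝ) (π : S → X → A → ℝ) : ℝ :=
  ∑ x, ∑ s, ∑ a, ρ x * dCtx γ P ν π x s a * r s a x

/-- The ambiguity set `Π₀(π)`: deterministic policies whose `ρo`-marginalized stationary
distribution matches the `ρe`-marginalized stationary distribution of `π`. -/
def AmbSet [DecidableEq A] (γ : ℝ) (P : S → A → X → S → ℝ) (ν : X → S → ℝ)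
    (ρo ρe : X → ℝ) (π : S → X → A → ℝ) : Set (S → X → A → ℝ) :=
  {π' | IsDet π' ∧ ∀ s a, dMarg γ P ν ρo π' s a = dMarg γ P ν ρe π s a}

end CMDP

/-!
In a fixed context write `m^π` for the discounted state occupancy of `π`, so that
`d^π(s,a|x) = π(a|s,x) m^π(s)` and `m^π` solves the flow equation `m = (1-γ)ν + γ m K_π`,
where `K_π` is the stochastic state-transition matrix of `π`; since `γ < 1` this equation has
at most one solution (an `ℓ¹` contraction). The mean policy is built so that
`Σ_{π ∈ Π₀} m^π` solves the flow equation of `π̄` with source `|Π₀| (1-γ) ν`, hence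
`|Π₀| d^{π̄} = Σ_{π ∈ Π₀} d^π` and `v(π̄)` is the average of the values over `Π₀`. In that average
the value-maximizing members contribute `v*` and the others at least `min_{Π₀} v`.
-/

theorem IsProb.sum_mul {Z W : Type*} [Fintype Z] [Fintype W] {p : Z → ℝ} {M : Z → W → ℝ}
    (hp : IsProb p) (hM : ∀ z, IsProb (M z)) : IsProb fun w => ∑ z, p z * M z w := by
  refine ⟨fun w => Finset.sum_nonneg fun z _ => mul_nonneg (hp.1 z) ((hM z).1 w), ?_⟩
  rw [Finset.sum_comm]
  simp only [← Finset.mul_sum, (hM _).2, mul_one, hp.2]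

theorem eq_of_discounted_fixed_point {Z : Type*} [Fintype Z] {M : Z → Z → ℝ}
    (hM : ∀ z, IsProb (M z)) {γ : ℝ} (hγ₀ : 0 ≤ γ) (hγ₁ : γ < 1) {c u w : Z → ℝ}
    (hu : ∀ z', u z' = c z' + γ * ∑ z, u z * M z z')
    (hw : ∀ z', w z' = c z' + γ * ∑ z, w z * M z z') : u = w := by
  have hdiff : ∀ z', |u z' - w z'| ≤ γ * ∑ z, |u z - w z| * M z z' := fun z' => by
    rw [hu, hw, add_sub_add_left_eq_sub, ← mul_sub, ← Finset.sum_sub_distrib, abs_mul,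
      abs_of_nonneg hγ₀]
    gcongr
    refine (Finset.abs_sum_le_sum_abs _ _).trans_eq (Finset.sum_congr rfl fun z _ => ?_)
    rw [← sub_mul, abs_mul, abs_of_nonneg ((hM z).1 z')]
  have hl1 : ∑ z', |u z' - w z'| ≤ γ * ∑ z, |u z - w z| := by
    calc ∑ z', |u z' - w z'| ≤ ∑ z', γ * ∑ z, |u z - w z| * M z z' :=
          Finset.sum_le_sum fun z' _ => hdiff z'
      _ = γ * ∑ z, |u z - w z| := by
          rw [← Finset.mul_sum, Finset.sum_comm]
          simp only [← Finset.mul_sum, (hM _).2, mul_one]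
  have hzero : ∑ z, |u z - w z| = 0 := by
    nlinarith [Finset.sum_nonneg fun z (_ : z ∈ Finset.univ) => abs_nonneg (u z - w z)]
  funext z
  have := (Finset.sum_eq_zero_iff_of_nonneg fun z _ => abs_nonneg (u z - w z)).mp hzero z
    (Finset.mem_univ z)
  linarith [abs_eq_zero.mp this]

theorem IsDet.isPolicy {S X A : Type*} [Fintype A] [DecidableEq A] {π : S → X → A → ℝ}
    (h : IsDet π) : IsPolicy π := by
  obtain ⟨f, rfl⟩ := h
  intro s x
  refine ⟨fun a => by unfold detPolicy; split_ifs <;> norm_num, ?_⟩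
  simp [detPolicy]

section Occupancy

variable {S X A : Type*} [Fintype S] [Fintype A]
  {γ : ℝ} {P : S → A → X → S → ℝ} {ν : X → S → ℝ} {π : S → X → A → ℝ} {x : X}

variable (P π x) in
def transKernel (s s' : S) : ℝ := ∑ a, π s x a * P s a x s'

theorem isProb_transKernel (hP : ∀ s a x, IsProb (P s a x)) (hπ : IsPolicy π) (s : S) :
    IsProb (transKernel P π x s) :=
  (hπ s x).sum_mul fun a => hP s a x

theorem stateDist_succ (t : ℕ) (s' : S) :
    stateDist P ν π x (t + 1) s' = ∑ s, stateDist P ν π x t s * transKernel P π x s s' := by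
  simp only [stateDist, transKernel, Finset.mul_sum, mul_assoc]

theorem isProb_stateDist (hP : ∀ s a x, IsProb (P s a x)) (hν : ∀ x, IsProb (ν x))
    (hπ : IsPolicy π) (t : ℕ) : IsProb (stateDist P ν π x t) := by
  induction t with
  | zero => exact hν x
  | succ t ih =>
    rw [funext (stateDist_succ t)]
    exact ih.sum_mul (isProb_transKernel hP hπ)

theorem summable_discounted_stateDist (hγ₀ : 0 ≤ γ) (hγ₁ : γ < 1)
    (hP : ∀ s a x, IsProb (P s a x)) (hν : ∀ x, IsProb (ν x)) (hπ : IsPolicy π) (s : S) :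
    Summable fun t : ℕ => γ ^ t * stateDist P ν π x t s := by
  refine (summable_geometric_of_lt_one hγ₀ hγ₁).of_nonneg_of_le
    (fun t => mul_nonneg (pow_nonneg hγ₀ t) ((isProb_stateDist hP hν hπ t).1 s))
    fun t => mul_le_of_le_one_right (pow_nonneg hγ₀ t) ?_
  have hd := isProb_stateDist (x := x) hP hν hπ t
  exact hd.2 ▸ Finset.single_le_sum (fun s' _ => hd.1 s') (Finset.mem_univ s)

variable (γ P ν π x) in
noncomputable def stateOcc (s : S) : ℝ := (1 - γ) * ∑' t : ℕ, γ ^ t * stateDist P ν π x t s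

theorem dCtx_eq_mul_stateOcc (s : S) (a : A) :
    dCtx γ P ν π x s a = π s x a * stateOcc γ P ν π x s := by
  rw [dCtx, stateOcc, ← tsum_mul_left]
  simp only [← tsum_mul_left]
  exact tsum_congr fun t => by ring

theorem sum_dCtx_eq_stateOcc (hπ : IsPolicy π) (s : S) :
    ∑ a, dCtx γ P ν π x s a = stateOcc γ P ν π x s := by
  simp only [dCtx_eq_mul_stateOcc, ← Finset.sum_mul, (hπ s x).2, one_mul]

theorem stateOcc_nonneg (hγ₀ : 0 ≤ γ) (hγ₁ : γ < 1) (hP : ∀ s a x, IsProb (P s a x))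
    (hν : ∀ x, IsProb (ν x)) (hπ : IsPolicy π) (s : S) : 0 ≤ stateOcc γ P ν π x s :=
  mul_nonneg (by linarith) <| tsum_nonneg fun t =>
    mul_nonneg (pow_nonneg hγ₀ t) ((isProb_stateDist hP hν hπ t).1 s)

theorem stateOcc_flow (hγ₀ : 0 ≤ γ) (hγ₁ : γ < 1) (hP : ∀ s a x, IsProb (P s a x))
    (hν : ∀ x, IsProb (ν x)) (hπ : IsPolicy π) (s' : S) :
    stateOcc γ P ν π x s' = (1 - γ) * ν x s'
      + γ * ∑ s, stateOcc γ P ν π x s * transKernel P π x s s' := by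
  have hsum := summable_discounted_stateDist (x := x) hγ₀ hγ₁ hP hν hπ
  have htail : ∑' t : ℕ, γ ^ (t + 1) * stateDist P ν π x (t + 1) s'
      = γ * ∑ s, (∑' t : ℕ, γ ^ t * stateDist P ν π x t s) * transKernel P π x s s' := by
    have hterm : ∀ t : ℕ, γ ^ (t + 1) * stateDist P ν π x (t + 1) s'
        = ∑ s, γ * ((γ ^ t * stateDist P ν π x t s) * transKernel P π x s s') := fun t => by
      rw [stateDist_succ, Finset.mul_sum]
      exact Finset.sum_congr rfl fun s _ => by ring
    rw [tsum_congr hterm, Summable.tsum_finsetSum fun s _ => ((hsum s).mul_right _).mul_left _,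
      Finset.mul_sum]
    simp only [tsum_mul_left, tsum_mul_right]
  rw [stateOcc, (hsum s').tsum_eq_zero_add, htail]
  simp only [stateOcc, stateDist, pow_zero, one_mul, Finset.mul_sum]
  rw [mul_add, Finset.mul_sum]
  congr 1
  exact Finset.sum_congr rfl fun s _ => by ring

theorem sum_stateOcc_mul_transKernel (T : Finset (S → X → A → ℝ)) (s s' : S) :
    ∑ π ∈ T, stateOcc γ P ν π x s * transKernel P π x s s'
      = ∑ a, (∑ π ∈ T, dCtx γ P ν π x s a) * P s a x s' := by
  simp only [transKernel, dCtx_eq_mul_stateOcc, Finset.mul_sum, Finset.sum_mul]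
  rw [Finset.sum_comm]
  exact Finset.sum_congr rfl fun a _ => Finset.sum_congr rfl fun π _ => by ring

theorem card_mul_dCtx_eq_sum (hγ₀ : 0 ≤ γ) (hγ₁ : γ < 1) (hP : ∀ s a x, IsProb (P s a x))
    (hν : ∀ x, IsProb (ν x)) {T : Finset (S → X → A → ℝ)} (hT : ∀ π ∈ T, IsPolicy π)
    {πbar : S → X → A → ℝ} (hπbar : IsPolicy πbar)
    (hmean : ∀ s a, 0 < ∑ π ∈ T, stateOcc γ P ν π x s →
      πbar s x a = (∑ π ∈ T, dCtx γ P ν π x s a) / ∑ π ∈ T, stateOcc γ P ν π x s)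
    (s : S) (a : A) :
    T.card * dCtx γ P ν πbar x s a = ∑ π ∈ T, dCtx γ P ν π x s a := by
  have hnonneg : ∀ s, ∀ π ∈ T, 0 ≤ stateOcc γ P ν π x s := fun s π hπ =>
    stateOcc_nonneg hγ₀ hγ₁ hP hν (hT π hπ) s
  have hsplit : ∀ s a, ∑ π ∈ T, dCtx γ P ν π x s a
      = πbar s x a * ∑ π ∈ T, stateOcc γ P ν π x s := fun s a => by
    rcases (Finset.sum_nonneg (hnonneg s)).eq_or_lt with hzero | hpos
    · have hocc := (Finset.sum_eq_zero_iff_of_nonneg (hnonneg s)).mp hzero.symm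
      rw [← hzero, mul_zero]
      exact Finset.sum_eq_zero fun π hπ => by rw [dCtx_eq_mul_stateOcc, hocc π hπ, mul_zero]
    · rw [hmean s a hpos, div_mul_cancel₀ _ hpos.ne']
  have hsum : ∀ s', ∑ π ∈ T, stateOcc γ P ν π x s' = T.card * ((1 - γ) * ν x s')
      + γ * ∑ s, (∑ π ∈ T, stateOcc γ P ν π x s) * transKernel P πbar x s s' := fun s' => by
    rw [Finset.sum_congr rfl fun π hπ => stateOcc_flow hγ₀ hγ₁ hP hν (hT π hπ) s',
      Finset.sum_add_distrib, Finset.sum_const, nsmul_eq_mul, ← Finset.mul_sum, Finset.sum_comm]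
    refine congrArg _ (congrArg _ (Finset.sum_congr rfl fun s _ => ?_))
    rw [sum_stateOcc_mul_transKernel, transKernel, Finset.mul_sum]
    exact Finset.sum_congr rfl fun a _ => by rw [hsplit]; ring
  have hbar : ∀ s', T.card * stateOcc γ P ν πbar x s' = T.card * ((1 - γ) * ν x s')
      + γ * ∑ s, T.card * stateOcc γ P ν πbar x s * transKernel P πbar x s s' := fun s' => by
    rw [stateOcc_flow hγ₀ hγ₁ hP hν hπbar s', mul_add, Finset.mul_sum, Finset.mul_sum,
      Finset.mul_sum]
    exact congrArg _ (Finset.sum_congr rfl fun s _ => by ring)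
  have hocc := eq_of_discounted_fixed_point (isProb_transKernel hP hπbar) hγ₀ hγ₁ hbar hsum
  rw [dCtx_eq_mul_stateOcc, mul_left_comm, congrFun hocc s, hsplit]

theorem card_mul_val_eq_sum [Fintype X] (hγ₀ : 0 ≤ γ) (hγ₁ : γ < 1)
    (hP : ∀ s a x, IsProb (P s a x)) (hν : ∀ x, IsProb (ν x)) {ρ : X → ℝ} (hρ : ∀ x, 0 ≤ ρ x)
    (r : S → A → X → ℝ) {T : Finset (S → X → A → ℝ)} (hT : ∀ π ∈ T, IsPolicy π)
    {πbar : S → X → A → ℝ} (hπbar : IsPolicy πbar)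
    (hmean : ∀ s x a, 0 < ∑ π ∈ T, ∑ a', ρ x * dCtx γ P ν π x s a' →
      πbar s x a = (∑ π ∈ T, ρ x * dCtx γ P ν π x s a) /
        (∑ π ∈ T, ∑ a', ρ x * dCtx γ P ν π x s a')) :
    T.card * val γ P ν ρ r πbar = ∑ π ∈ T, val γ P ν ρ r π := by
  have hctx : ∀ x, 0 < ρ x → ∀ s a,
      T.card * dCtx γ P ν πbar x s a = ∑ π ∈ T, dCtx γ P ν π x s a := fun x hx =>
    card_mul_dCtx_eq_sum hγ₀ hγ₁ hP hν hT hπbar fun s a hpos => by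
      have hden : ∑ π ∈ T, ∑ a', ρ x * dCtx γ P ν π x s a'
          = ρ x * ∑ π ∈ T, stateOcc γ P ν π x s := by
        rw [Finset.mul_sum]
        exact Finset.sum_congr rfl fun π hπ => by
          rw [← Finset.mul_sum, sum_dCtx_eq_stateOcc (hT π hπ)]
      rw [hmean s x a (hden ▸ mul_pos hx hpos), hden, ← Finset.mul_sum,
        mul_div_mul_left _ _ hx.ne']
  unfold val
  rw [Finset.mul_sum, Finset.sum_comm]
  refine Finset.sum_congr rfl fun x _ => ?_
  rcases (hρ x).eq_or_lt with hzero | hpos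
  · simp [← hzero]
  calc T.card * ∑ s, ∑ a, ρ x * dCtx γ P ν πbar x s a * r s a x
      = ∑ s, ∑ a, ρ x * (T.card * dCtx γ P ν πbar x s a) * r s a x := by
        simp only [Finset.mul_sum]
        exact Finset.sum_congr rfl fun s _ => Finset.sum_congr rfl fun a _ => by ring
    _ = ∑ π ∈ T, ∑ s, ∑ a, ρ x * dCtx γ P ν π x s a * r s a x := by
        simp only [hctx x hpos, Finset.mul_sum, Finset.sum_mul]
        exact (Finset.sum_congr rfl fun s _ => Finset.sum_comm).trans Finset.sum_comm

end Occupancy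

theorem ncard_div_mul_add_le_average {ι : Type*} {T O : Set ι} (hT : T.Finite)
    (hne : T.Nonempty) (f : ι → ℝ) {M : ℝ} (hM : ∀ i ∈ O ∩ T, f i = M) :
    ((O ∩ T).ncard / T.ncard : ℝ) * M + (1 - (O ∩ T).ncard / T.ncard) * sInf (f '' T)
      ≤ (∑ i ∈ hT.toFinset, f i) / T.ncard := by
  classical
  set F := hT.toFinset
  have hN : T.ncard = F.card := Set.ncard_eq_toFinset_card T hT
  have hO : (O ∩ T).ncard = (F.filter (· ∈ O)).card := by
    rw [← Set.ncard_coe_finset]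
    congr
    ext i
    simp [F, and_comm]
  have hpos : (0 : ℝ) < F.card := by exact_mod_cast (hT.toFinset_nonempty.mpr hne).card_pos
  have hopt : ∑ i ∈ F.filter (· ∈ O), f i = (F.filter (· ∈ O)).card * M := by
    rw [Finset.sum_congr rfl fun i hi => hM i ?_, Finset.sum_const, nsmul_eq_mul]
    obtain ⟨hiF, hiO⟩ := Finset.mem_filter.mp hi
    exact ⟨hiO, hT.mem_toFinset.mp hiF⟩
  have hrest : ((F.filter (· ∉ O)).card : ℝ) * sInf (f '' T) ≤ ∑ i ∈ F.filter (· ∉ O), f i := by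
    rw [← nsmul_eq_mul]
    exact Finset.card_nsmul_le_sum _ _ _ fun i hi =>
      csInf_le (hT.image f).bddBelow ⟨i, hT.mem_toFinset.mp (Finset.mem_filter.mp hi).1, rfl⟩
  have hcard : ((F.filter (· ∉ O)).card : ℝ) = F.card - (F.filter (· ∈ O)).card := by
    rw [eq_sub_iff_add_eq, add_comm]
    exact_mod_cast Finset.card_filter_add_card_filter_not _
  rw [hN, hO, le_div_iff₀ hpos, ← Finset.sum_filter_add_sum_filter_not F (· ∈ O), hopt]
  rw [hcard] at hrest
  have hexpand : ((F.filter (· ∈ O)).card / F.card * M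
      + (1 - (F.filter (· ∈ O)).card / F.card) * sInf (f '' T)) * F.card
      = (F.filter (· ∈ O)).card * M + (F.card - (F.filter (· ∈ O)).card) * sInf (f '' T) := by
    field_simp
  linarith

theorem mean_policy_robust_general
    {S X A : Type*} [Fintype S] [Fintype X] [Fintype A] [DecidableEq A]
    (γ : ℝ) (hγ : 0 < γ ∧ γ < 1)
    (P : S → A → X → S → ℝ) (hP : ∀ s a x, IsProb (P s a x))
    (ν : X → S → ℝ) (hν : ∀ x, IsProb (ν x))
    (ρo ρe : X → ℝ) (hρo : IsProb ρo)
    (r : S → A → X → ℝ)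
    (πstar : S → X → A → ℝ) (hπstar : IsPolicy πstar)
    (hopt : ∀ π' : S → X → A → ℝ, IsPolicy π' →
      val γ P ν ρo r π' ≤ val γ P ν ρo r πstar)
    (hfin : (AmbSet γ P ν ρo ρe πstar).Finite)
    (hne : (AmbSet γ P ν ρo ρe πstar).Nonempty)
    (πbar : S → X → A → ℝ) (hπbar : IsPolicy πbar)
    (hmean : ∀ s x a,
      0 < ∑ π' ∈ hfin.toFinset, ∑ a', ρo x * dCtx γ P ν π' x s a' →
      πbar s x a =
        (∑ π' ∈ hfin.toFinset, ρo x * dCtx γ P ν π' x s a) /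
        (∑ π' ∈ hfin.toFinset, ∑ a', ρo x * dCtx γ P ν π' x s a')) :
    val γ P ν ρo r πbar ≥
      (((({π' | IsPolicy π' ∧ ∀ π'' : S → X → A → ℝ, IsPolicy π'' →
            val γ P ν ρo r π'' ≤ val γ P ν ρo r π'} ∩
          AmbSet γ P ν ρo ρe πstar).ncard : ℝ) /
          ((AmbSet γ P ν ρo ρe πstar).ncard : ℝ)) * val γ P ν ρo r πstar) +
      (1 - ((({π' | IsPolicy π' ∧ ∀ π'' : S → X → A → ℝ, IsPolicy π'' →
            val γ P ν ρo r π'' ≤ val γ P ν ρo r π'} ∩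
          AmbSet γ P ν ρo ρe πstar).ncard : ℝ) /
          ((AmbSet γ P ν ρo ρe πstar).ncard : ℝ))) *
        sInf (val γ P ν ρo r '' AmbSet γ P ν ρo ρe πstar) := by
  have hpol : ∀ π ∈ hfin.toFinset, IsPolicy π := fun π hπ =>
    (hfin.mem_toFinset.mp hπ).1.isPolicy
  have hval := card_mul_val_eq_sum hγ.1.le hγ.2 hP hν hρo.1 r hpol hπbar hmean
  have hcard : (0 : ℝ) < hfin.toFinset.card := by
    exact_mod_cast (hfin.toFinset_nonempty.mpr hne).card_pos
  refine (ncard_div_mul_add_le_average hfin hne _ fun π hπ =>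
    le_antisymm (hopt π hπ.1.1) (hπ.1.2 πstar hπstar)).trans_eq ?_
  rw [Set.ncard_eq_toFinset_card _ hfin, ← hval, mul_div_cancel_left₀ _ hcard.ne']

/-- **Robustness of the mean policy.** Assume `ρe ≡ ρo`, let `π*` be
value-maximizing, and assume `Π₀(π*)` is finite and nonempty. The mean policy `π̄`,
defined by the normalized average of occupancies `d^π(s,a,x) = ρo(x) d^π(s,a|x)` over
`Π₀(π*)` wherever the denominator is positive, satisfies
`v(π̄) ≥ α* v* + (1−α*) min_{π∈Π₀(π*)} v(π)` with
`α* = |Π*_M ∩ Π₀(π*)| / |Π₀(π*)|`. -/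
theorem mean_policy_robust
    {S X A : Type*} [Fintype S] [Fintype X] [Fintype A] [DecidableEq A]
    [Nonempty S] [Nonempty X] [Nonempty A]
    (γ : ℝ) (hγ : 0 < γ ∧ γ < 1)
    (P : S → A → X → S → ℝ) (hP : ∀ s a x, IsProb (P s a x))
    (ν : X → S → ℝ) (hν : ∀ x, IsProb (ν x))
    (ρo ρe : X → ℝ) (hρo : IsProb ρo) (hρe : ρe = ρo)
    (r : S → A → X → ℝ) (hr : ∀ s a x, r s a x ∈ Set.Icc (0:ℝ) 1)
    (πstar : S → X → A → ℝ) (hπstar : IsPolicy πstar)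
    (hopt : ∀ π' : S → X → A → ℝ, IsPolicy π' →
      val γ P ν ρo r π' ≤ val γ P ν ρo r πstar)
    (hfin : (AmbSet γ P ν ρo ρe πstar).Finite)
    (hne : (AmbSet γ P ν ρo ρe πstar).Nonempty)
    (πbar : S → X → A → ℝ) (hπbar : IsPolicy πbar)
    (hmean : ∀ s x a,
      0 < ∑ π' ∈ hfin.toFinset, ∑ a', ρo x * dCtx γ P ν π' x s a' →
      πbar s x a =
        (∑ π' ∈ hfin.toFinset, ρo x * dCtx γ P ν π' x s a) /
        (∑ π' ∈ hfin.toFinset, ∑ a', ρo x * dCtx γ P ν π' x s a')) :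
    val γ P ν ρo r πbar ≥
      (((({π' | IsPolicy π' ∧ ∀ π'' : S → X → A → ℝ, IsPolicy π'' →
            val γ P ν ρo r π'' ≤ val γ P ν ρo r π'} ∩
          AmbSet γ P ν ρo ρe πstar).ncard : ℝ) /
          ((AmbSet γ P ν ρo ρe πstar).ncard : ℝ)) * val γ P ν ρo r πstar) +
      (1 - ((({π' | IsPolicy π' ∧ ∀ π'' : S → X → A → ℝ, IsPolicy π'' →
            val γ P ν ρo r π'' ≤ val γ P ν ρo r π'} ∩
          AmbSet γ P ν ρo ρe πstar).ncard : ℝ) /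
          ((AmbSet γ P ν ρo ρe πstar).ncard : ℝ))) *
        sInf (val γ P ν ρo r '' AmbSet γ P ν ρo ρe πstar) :=
  mean_policy_robust_general γ hγ P hP ν hν ρo ρe hρo r πstar hπstar hopt hfin hne πbar hπbar hmean
end

section
/- (Occupancy-measure mixture.) Fix a context x and let π_1, …, π_N be policies. Define μ(s,a) = (1/N) Σ_{i=1}^N d^{π_i}(s,a|x), and let π̄ be any policy with π̄(a|s,x) = μ(s,a) / Σ_{a'} μ(s,a') at every state s where Σ_{a'} μ(s,a') > 0. Then d^{π̄}(s,a|x) = μ(s,a) for all (s,a); that is, the per-context stationary distribution of the mean policy equals the average of the per-context stationary distributions of π_1, …, π_N. -/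
open scoped BigOperators
set_option linter.unusedSectionVars false

section AuxOcc

variable {S X A : Type*} [Fintype S] [Fintype X] [Fintype A]
variable {γ : ℝ} {P : S → A → X → S → ℝ} {ν : X → S → ℝ} {π : S → X → A → ℝ} {x : X}

lemma sd_nonneg (hP : ∀ s a x, IsProb (P s a x)) (hν : ∀ x, IsProb (ν x))
    (hπ : IsPolicy π) : ∀ t s, 0 ≤ stateDist P ν π x t s := by
  intro t
  induction t with
  | zero => exact (hν x).1
  | succ t ih =>
    intro s'
    apply Finset.sum_nonneg; intro s _
    apply Finset.sum_nonneg; intro a _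
    exact mul_nonneg (mul_nonneg (ih s) ((hπ s x).1 a)) ((hP s a x).1 s')

lemma sd_sum (hP : ∀ s a x, IsProb (P s a x)) (hν : ∀ x, IsProb (ν x))
    (hπ : IsPolicy π) : ∀ t, ∑ s, stateDist P ν π x t s = 1 := by
  intro t
  induction t with
  | zero => exact (hν x).2
  | succ t ih =>
    show (∑ s', ∑ s, ∑ a, stateDist P ν π x t s * π s x a * P s a x s') = 1
    rw [Finset.sum_comm]
    calc (∑ s, ∑ s', ∑ a, stateDist P ν π x t s * π s x a * P s a x s')
        = ∑ s, stateDist P ν π x t s := by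
          apply Finset.sum_congr rfl; intro s _
          rw [Finset.sum_comm]
          calc (∑ a, ∑ s', stateDist P ν π x t s * π s x a * P s a x s')
              = ∑ a, stateDist P ν π x t s * π s x a := by
                apply Finset.sum_congr rfl; intro a _
                rw [← Finset.mul_sum, (hP s a x).2, mul_one]
            _ = stateDist P ν π x t s := by
                rw [← Finset.mul_sum, (hπ s x).2, mul_one]
      _ = 1 := ih

lemma sd_le_one (hP : ∀ s a x, IsProb (P s a x)) (hν : ∀ x, IsProb (ν x))
    (hπ : IsPolicy π) (t : ℕ) (s : S) : stateDist P ν π x t s ≤ 1 := by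
  have h := sd_sum hP hν hπ (x := x) t
  calc stateDist P ν π x t s ≤ ∑ s', stateDist P ν π x t s' :=
        Finset.single_le_sum (fun s' _ => sd_nonneg hP hν hπ t s') (Finset.mem_univ s)
    _ = 1 := h

lemma summable_sd (hγ : 0 < γ ∧ γ < 1) (hP : ∀ s a x, IsProb (P s a x))
    (hν : ∀ x, IsProb (ν x)) (hπ : IsPolicy π) (s : S) :
    Summable (fun t => γ ^ t * stateDist P ν π x t s) := by
  apply Summable.of_nonneg_of_le
    (fun t => mul_nonneg (pow_nonneg hγ.1.le t) (sd_nonneg hP hν hπ t s))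
    (fun t => ?_) (summable_geometric_of_lt_one hγ.1.le hγ.2)
  calc γ ^ t * stateDist P ν π x t s ≤ γ ^ t * 1 := by
        exact mul_le_mul_of_nonneg_left (sd_le_one hP hν hπ t s) (pow_nonneg hγ.1.le t)
    _ = γ ^ t := mul_one _

lemma summable_sda (hγ : 0 < γ ∧ γ < 1) (hP : ∀ s a x, IsProb (P s a x))
    (hν : ∀ x, IsProb (ν x)) (hπ : IsPolicy π) (s : S) (a : A) :
    Summable (fun t => γ ^ t * (stateDist P ν π x t s * π s x a)) := by
  have : (fun t => γ ^ t * (stateDist P ν π x t s * π s x a))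
      = fun t => (γ ^ t * stateDist P ν π x t s) * π s x a := by
    funext t; ring
  rw [this]
  exact (summable_sd hγ hP hν hπ s).mul_right _

/-- Discounted state-occupancy. -/
noncomputable def Dst (γ : ℝ) (P : S → A → X → S → ℝ) (ν : X → S → ℝ)
    (π : S → X → A → ℝ) (x : X) (s : S) : ℝ :=
  (1 - γ) * ∑' t : ℕ, γ ^ t * stateDist P ν π x t s

lemma dCtx_eq_Dst (s : S) (a : A) :
    dCtx γ P ν π x s a = Dst γ P ν π x s * π s x a := by
  unfold dCtx Dst
  rw [mul_assoc, ← tsum_mul_right]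
  congr 1
  exact tsum_congr fun t => by ring

lemma Dst_nonneg (hγ : 0 < γ ∧ γ < 1) (hP : ∀ s a x, IsProb (P s a x))
    (hν : ∀ x, IsProb (ν x)) (hπ : IsPolicy π) (s : S) : 0 ≤ Dst γ P ν π x s := by
  apply mul_nonneg (by linarith [hγ.2])
  exact tsum_nonneg fun t =>
    mul_nonneg (pow_nonneg hγ.1.le t) (sd_nonneg hP hν hπ t s)

lemma dCtx_nonneg (hγ : 0 < γ ∧ γ < 1) (hP : ∀ s a x, IsProb (P s a x))
    (hν : ∀ x, IsProb (ν x)) (hπ : IsPolicy π) (s : S) (a : A) :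
    0 ≤ dCtx γ P ν π x s a := by
  rw [dCtx_eq_Dst]
  exact mul_nonneg (Dst_nonneg hγ hP hν hπ s) ((hπ s x).1 a)

lemma sum_dCtx (hπ : IsPolicy π) (s : S) :
    ∑ a, dCtx γ P ν π x s a = Dst γ P ν π x s := by
  simp only [dCtx_eq_Dst]
  rw [← Finset.mul_sum, (hπ s x).2, mul_one]

lemma Dst_flow (hγ : 0 < γ ∧ γ < 1) (hP : ∀ s a x, IsProb (P s a x))
    (hν : ∀ x, IsProb (ν x)) (hπ : IsPolicy π) (s' : S) :
    Dst γ P ν π x s' = (1 - γ) * ν x s'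
      + γ * ∑ s, ∑ a, dCtx γ P ν π x s a * P s a x s' := by
  have hsum := summable_sd hγ hP hν hπ (x := x) s'
  have key : (∑' t : ℕ, γ ^ t * stateDist P ν π x t s')
      = ν x s' + γ * ∑ s, ∑ a, (∑' t : ℕ, γ ^ t * stateDist P ν π x t s)
          * π s x a * P s a x s' := by
    rw [Summable.tsum_eq_zero_add hsum]
    simp only [pow_zero, one_mul, stateDist]
    congr 1
    have step : ∀ t : ℕ, γ ^ (t + 1) * (∑ s, ∑ a, stateDist P ν π x t s * π s x a * P s a x s')
        = ∑ s, ∑ a, γ * (γ ^ t * stateDist P ν π x t s) * π s x a * P s a x s' := by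
      intro t
      rw [Finset.mul_sum]
      apply Finset.sum_congr rfl; intro s _
      rw [Finset.mul_sum]
      apply Finset.sum_congr rfl; intro a _
      ring
    calc (∑' t : ℕ, γ ^ (t + 1) * (∑ s, ∑ a, stateDist P ν π x t s * π s x a * P s a x s'))
        = ∑' t : ℕ, ∑ s, ∑ a, γ * (γ ^ t * stateDist P ν π x t s) * π s x a * P s a x s' := by
          exact tsum_congr step
      _ = ∑ s, ∑' t : ℕ, ∑ a, γ * (γ ^ t * stateDist P ν π x t s) * π s x a * P s a x s' := by
          rw [Summable.tsum_finsetSum]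
          intro s _
          apply summable_sum
          intro a _
          have : (fun t => γ * (γ ^ t * stateDist P ν π x t s) * π s x a * P s a x s')
              = fun t => (γ ^ t * stateDist P ν π x t s) * (γ * π s x a * P s a x s') := by
            funext t; ring
          rw [this]
          exact (summable_sd hγ hP hν hπ s).mul_right _
      _ = ∑ s, ∑ a, ∑' t : ℕ, γ * (γ ^ t * stateDist P ν π x t s) * π s x a * P s a x s' := by
          apply Finset.sum_congr rfl; intro s _
          rw [Summable.tsum_finsetSum]
          intro a _
          have : (fun t => γ * (γ ^ t * stateDist P ν π x t s) * π s x a * P s a x s')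
              = fun t => (γ ^ t * stateDist P ν π x t s) * (γ * π s x a * P s a x s') := by
            funext t; ring
          rw [this]
          exact (summable_sd hγ hP hν hπ s).mul_right _
      _ = γ * ∑ s, ∑ a, (∑' t : ℕ, γ ^ t * stateDist P ν π x t s) * π s x a * P s a x s' := by
          rw [Finset.mul_sum]
          apply Finset.sum_congr rfl; intro s _
          rw [Finset.mul_sum]
          apply Finset.sum_congr rfl; intro a _
          have : (fun t => γ * (γ ^ t * stateDist P ν π x t s) * π s x a * P s a x s')
              = fun t => (γ ^ t * stateDist P ν π x t s) * (γ * π s x a * P s a x s') := by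
            funext t; ring
          rw [this, tsum_mul_right]
          ring
  unfold Dst
  rw [key, mul_add]
  congr 1
  simp only [dCtx_eq_Dst]
  unfold Dst
  simp only [Finset.mul_sum]
  apply Finset.sum_congr rfl; intro s _
  apply Finset.sum_congr rfl; intro a _
  ring

end AuxOcc

/-- **Occupancy-measure mixture.** Fix a context `x` and policies
`π_1, …, π_N`. If `μ(s,a) = (1/N) Σᵢ d^{πᵢ}(s,a|x)` and `π̄` plays according to the
ratio `μ(s,a)/Σ_{a'} μ(s,a')` in context `x` wherever the denominator is positive, then
`d^{π̄}(s,a|x) = μ(s,a)` for all `(s,a)`. -/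
theorem occupancy_mixture
    {S X A : Type*} [Fintype S] [Fintype X] [Fintype A]
    [Nonempty S] [Nonempty X] [Nonempty A]
    (γ : ℝ) (hγ : 0 < γ ∧ γ < 1)
    (P : S → A → X → S → ℝ) (hP : ∀ s a x, IsProb (P s a x))
    (ν : X → S → ℝ) (hν : ∀ x, IsProb (ν x))
    (x : X) (N : ℕ) (hN : 0 < N)
    (πs : Fin N → S → X → A → ℝ) (hπs : ∀ i, IsPolicy (πs i))
    (μ : S → A → ℝ)
    (hμ : ∀ s a, μ s a = (1 / (N : ℝ)) * ∑ i, dCtx γ P ν (πs i) x s a)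
    (πbar : S → X → A → ℝ) (hπbar : IsPolicy πbar)
    (hratio : ∀ s a, 0 < ∑ a', μ s a' → πbar s x a = μ s a / ∑ a', μ s a') :
    ∀ s a, dCtx γ P ν πbar x s a = μ s a := by
  have hNne : (N : ℝ) ≠ 0 := Nat.cast_ne_zero.2 hN.ne'
  set M : S → ℝ := fun s => ∑ a', μ s a' with hMdef
  have hμnn : ∀ s a, 0 ≤ μ s a := by
    intro s a
    rw [hμ]
    apply mul_nonneg (by positivity)
    exact Finset.sum_nonneg fun i _ => dCtx_nonneg hγ hP hν (hπs i) s a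
  have hMnn : ∀ s, 0 ≤ M s := fun s => Finset.sum_nonneg fun a _ => hμnn s a
  have hdecomp : ∀ s a, μ s a = M s * πbar s x a := by
    intro s a
    rcases lt_or_eq_of_le (hMnn s) with hpos | hzero
    · rw [hratio s a hpos, mul_comm, div_mul_cancel₀ _ hpos.ne']
    · have hz : μ s a = 0 :=
        (Finset.sum_eq_zero_iff_of_nonneg (fun a _ => hμnn s a)).1 hzero.symm a
          (Finset.mem_univ a)
      rw [hz, ← hzero, zero_mul]
  have hMD : ∀ s, M s = (1 / (N : ℝ)) * ∑ i, Dst γ P ν (πs i) x s := by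
    intro s
    simp only [hMdef, hμ, ← Finset.mul_sum]
    congr 1
    rw [Finset.sum_comm]
    exact Finset.sum_congr rfl fun i _ => sum_dCtx (hπs i) s
  -- flow equation for μ
  have hμflow : ∀ s', M s' = (1 - γ) * ν x s'
      + γ * ∑ s, ∑ a, μ s a * P s a x s' := by
    intro s'
    have hterm : ∀ s a, μ s a * P s a x s'
        = ∑ i, (1 / (N : ℝ)) * (dCtx γ P ν (πs i) x s a * P s a x s') := by
      intro s a
      rw [hμ, Finset.mul_sum, Finset.sum_mul]
      exact Finset.sum_congr rfl fun i _ => by ring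
    have swap : ∑ s, ∑ a, μ s a * P s a x s'
        = (1 / (N : ℝ)) * ∑ i, ∑ s, ∑ a, dCtx γ P ν (πs i) x s a * P s a x s' := by
      calc ∑ s, ∑ a, μ s a * P s a x s'
          = ∑ s, ∑ a, ∑ i, (1 / (N : ℝ)) * (dCtx γ P ν (πs i) x s a * P s a x s') :=
            Finset.sum_congr rfl fun s _ => Finset.sum_congr rfl fun a _ => hterm s a
        _ = ∑ s, ∑ i, ∑ a, (1 / (N : ℝ)) * (dCtx γ P ν (πs i) x s a * P s a x s') :=
            Finset.sum_congr rfl fun s _ => Finset.sum_comm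
        _ = ∑ i, ∑ s, ∑ a, (1 / (N : ℝ)) * (dCtx γ P ν (πs i) x s a * P s a x s') :=
            Finset.sum_comm
        _ = (1 / (N : ℝ)) * ∑ i, ∑ s, ∑ a, dCtx γ P ν (πs i) x s a * P s a x s' := by
            simp only [← Finset.mul_sum]
    rw [hMD s',
      Finset.sum_congr rfl fun i (_ : i ∈ Finset.univ) => Dst_flow hγ hP hν (hπs i) s',
      Finset.sum_add_distrib, mul_add, swap]
    congr 1
    · rw [Finset.sum_const, Finset.card_univ, Fintype.card_fin, nsmul_eq_mul]
      field_simp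
    · rw [← Finset.mul_sum]
      ring
  -- flow equation for δ = Dst πbar - M
  have hδ : ∀ s', Dst γ P ν πbar x s' - M s'
      = γ * ∑ s, (Dst γ P ν πbar x s - M s) * (∑ a, πbar s x a * P s a x s') := by
    intro s'
    rw [Dst_flow hγ hP hν hπbar s', hμflow s']
    have expand : ∀ f : S → ℝ, ∑ s, f s * (∑ a, πbar s x a * P s a x s')
        = ∑ s, ∑ a, f s * πbar s x a * P s a x s' := by
      intro f
      apply Finset.sum_congr rfl; intro s _
      rw [Finset.mul_sum]
      exact Finset.sum_congr rfl fun a _ => by ring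
    rw [expand (fun s => Dst γ P ν πbar x s - M s)]
    simp only [dCtx_eq_Dst, hdecomp]
    rw [show (∑ s, ∑ a, (Dst γ P ν πbar x s - M s) * πbar s x a * P s a x s')
        = (∑ s, ∑ a, Dst γ P ν πbar x s * πbar s x a * P s a x s')
          - (∑ s, ∑ a, M s * πbar s x a * P s a x s') from ?_]
    · ring
    · rw [← Finset.sum_sub_distrib]
      apply Finset.sum_congr rfl; intro s _
      rw [← Finset.sum_sub_distrib]
      exact Finset.sum_congr rfl fun a _ => by ring
  -- the transition kernel rows of the induced chain are subprobabilities summing to 1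
  have hc_nonneg : ∀ s s', 0 ≤ ∑ a, πbar s x a * P s a x s' := fun s s' =>
    Finset.sum_nonneg fun a _ => mul_nonneg ((hπbar s x).1 a) ((hP s a x).1 s')
  have hc_sum : ∀ s, ∑ s', ∑ a, πbar s x a * P s a x s' = 1 := by
    intro s
    rw [Finset.sum_comm]
    calc ∑ a, ∑ s', πbar s x a * P s a x s' = ∑ a, πbar s x a := by
          apply Finset.sum_congr rfl; intro a _
          rw [← Finset.mul_sum, (hP s a x).2, mul_one]
      _ = 1 := (hπbar s x).2
  -- contraction: ∑ |δ| ≤ γ ∑ |δ|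
  have habs : ∀ s', |Dst γ P ν πbar x s' - M s'|
      ≤ γ * ∑ s, |Dst γ P ν πbar x s - M s| * (∑ a, πbar s x a * P s a x s') := by
    intro s'
    rw [hδ s', abs_mul, abs_of_pos hγ.1]
    apply mul_le_mul_of_nonneg_left _ hγ.1.le
    calc |∑ s, (Dst γ P ν πbar x s - M s) * (∑ a, πbar s x a * P s a x s')|
        ≤ ∑ s, |(Dst γ P ν πbar x s - M s) * (∑ a, πbar s x a * P s a x s')| :=
          Finset.abs_sum_le_sum_abs _ _
      _ = ∑ s, |Dst γ P ν πbar x s - M s| * (∑ a, πbar s x a * P s a x s') := by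
          apply Finset.sum_congr rfl; intro s _
          rw [abs_mul, abs_of_nonneg (hc_nonneg s s')]
  have hT : ∑ s', |Dst γ P ν πbar x s' - M s'| ≤ γ * ∑ s, |Dst γ P ν πbar x s - M s| := by
    calc ∑ s', |Dst γ P ν πbar x s' - M s'|
        ≤ ∑ s', γ * ∑ s, |Dst γ P ν πbar x s - M s| * (∑ a, πbar s x a * P s a x s') :=
          Finset.sum_le_sum fun s' _ => habs s'
      _ = γ * ∑ s, |Dst γ P ν πbar x s - M s| := by
          rw [← Finset.mul_sum]
          congr 1
          rw [Finset.sum_comm]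
          apply Finset.sum_congr rfl; intro s _
          rw [← Finset.mul_sum, hc_sum s, mul_one]
  have hTzero : ∑ s, |Dst γ P ν πbar x s - M s| = 0 := by
    have hTnn : 0 ≤ ∑ s, |Dst γ P ν πbar x s - M s| :=
      Finset.sum_nonneg fun s _ => abs_nonneg _
    nlinarith [hγ.2]
  have hδzero : ∀ s, Dst γ P ν πbar x s = M s := by
    intro s
    have := (Finset.sum_eq_zero_iff_of_nonneg fun s (_ : s ∈ Finset.univ) => abs_nonneg
      (Dst γ P ν πbar x s - M s)).1 hTzero s (Finset.mem_univ s)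
    have := abs_eq_zero.1 this
    linarith
  intro s a
  rw [dCtx_eq_Dst, hδzero s, ← hdecomp]
end

section
/- Assume Supp(ρo) ⊆ Supp(ρe). Then every policy that maximizes the ρe-marginalized value v_{ρe}(π) = Σ_{x,s,a} ρe(x) d^π(s,a|x) r(s,a,x) also maximizes the ρo-marginalized value v_{ρo}(π) = Σ_{x,s,a} ρo(x) d^π(s,a|x) r(s,a,x); that is, argmax_π v_{ρe}(π) ⊆ argmax_π v_{ρo}(π). -/
open scoped BigOperators

section Aux

variable {S X A : Type*} [Fintype S] [Fintype X] [Fintype A]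

lemma stateDist_congr (P : S → A → X → S → ℝ) (ν : X → S → ℝ)
    (π₁ π₂ : S → X → A → ℝ) (x : X) (h : ∀ s, π₁ s x = π₂ s x) :
    ∀ t, stateDist P ν π₁ x t = stateDist P ν π₂ x t := by
  intro t
  induction t with
  | zero => rfl
  | succ t ih =>
    funext s'
    simp only [stateDist, ih, h]

lemma dCtx_congr (γ : ℝ) (P : S → A → X → S → ℝ) (ν : X → S → ℝ)
    (π₁ π₂ : S → X → A → ℝ) (x : X) (h : ∀ s, π₁ s x = π₂ s x) (s : S) (a : A) :
    dCtx γ P ν π₁ x s a = dCtx γ P ν π₂ x s a := by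
  unfold dCtx
  simp only [stateDist_congr P ν π₁ π₂ x h, h]

/-- Per-context value. -/
noncomputable def ctxVal (γ : ℝ) (P : S → A → X → S → ℝ) (ν : X → S → ℝ)
    (r : S → A → X → ℝ) (π : S → X → A → ℝ) (x : X) : ℝ :=
  ∑ s, ∑ a, dCtx γ P ν π x s a * r s a x

lemma val_eq_sum (γ : ℝ) (P : S → A → X → S → ℝ) (ν : X → S → ℝ)
    (ρ : X → ℝ) (r : S → A → X → ℝ) (π : S → X → A → ℝ) :
    val γ P ν ρ r π = ∑ x, ρ x * ctxVal γ P ν r π x := by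
  unfold val ctxVal
  refine Finset.sum_congr rfl fun x _ => ?_
  rw [Finset.mul_sum]
  refine Finset.sum_congr rfl fun s _ => ?_
  rw [Finset.mul_sum]
  refine Finset.sum_congr rfl fun a _ => ?_
  ring

end Aux

/-- If `Supp(ρo) ⊆ Supp(ρe)`, then every policy maximizing the
`ρe`-marginalized value also maximizes the `ρo`-marginalized value. -/
theorem expert_optimal_is_online_optimal
    {S X A : Type*} [Fintype S] [Fintype X] [Fintype A]
    [Nonempty S] [Nonempty X] [Nonempty A]
    (γ : ℝ) (hγ : 0 < γ ∧ γ < 1)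
    (P : S → A → X → S → ℝ) (hP : ∀ s a x, IsProb (P s a x))
    (ν : X → S → ℝ) (hν : ∀ x, IsProb (ν x))
    (ρo ρe : X → ℝ) (hρo : IsProb ρo) (hρe : IsProb ρe)
    (hsupp : ∀ x, 0 < ρo x → 0 < ρe x)
    (r : S → A → X → ℝ) (hr : ∀ s a x, r s a x ∈ Set.Icc (0:ℝ) 1) :
    ∀ π : S → X → A → ℝ, IsPolicy π →
      (∀ π' : S → X → A → ℝ, IsPolicy π' → val γ P ν ρe r π' ≤ val γ P ν ρe r π) →
      (∀ π' : S → X → A → ℝ, IsPolicy π' → val γ P ν ρo r π' ≤ val γ P ν ρo r π) := by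
  classical
  intro π hπ hopt π' hπ'
  have key : ∀ x, 0 < ρe x →
      ctxVal γ P ν r π' x ≤ ctxVal γ P ν r π x := by
    intro x hx
    set π'' : S → X → A → ℝ := fun s y => if y = x then π' s y else π s y with hπ''def
    have hpol : IsPolicy π'' := by
      intro s y
      by_cases h : y = x
      · simpa [hπ''def, h] using hπ' s y
      · simpa [hπ''def, h] using hπ s y
    have h1 : ∀ s, π'' s x = π' s x := fun s => by simp [hπ''def]
    have h2 : ∀ y, y ≠ x → ∀ s, π'' s y = π s y := fun y hy s => by simp [hπ''def, hy]
    have hval := hopt π'' hpol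
    rw [val_eq_sum, val_eq_sum] at hval
    have hsame : ∀ y ∈ Finset.univ.erase x,
        ρe y * ctxVal γ P ν r π'' y = ρe y * ctxVal γ P ν r π y := by
      intro y hy
      have hyx : y ≠ x := Finset.ne_of_mem_erase hy
      congr 1
      unfold ctxVal
      refine Finset.sum_congr rfl fun s _ => Finset.sum_congr rfl fun a _ => ?_
      rw [dCtx_congr γ P ν π'' π y (h2 y hyx) s a]
    have hcx : ctxVal γ P ν r π'' x = ctxVal γ P ν r π' x := by
      unfold ctxVal
      refine Finset.sum_congr rfl fun s _ => Finset.sum_congr rfl fun a _ => ?_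
      rw [dCtx_congr γ P ν π'' π' x h1 s a]
    rw [← Finset.add_sum_erase _ _ (Finset.mem_univ x),
        ← Finset.add_sum_erase _ (fun y => ρe y * ctxVal γ P ν r π y) (Finset.mem_univ x),
        Finset.sum_congr rfl hsame, add_le_add_iff_right, hcx] at hval
    exact le_of_mul_le_mul_left hval hx
  rw [val_eq_sum, val_eq_sum]
  refine Finset.sum_le_sum fun x _ => ?_
  rcases (hρo.1 x).eq_or_lt with h | h
  · simp [← h]
  · exact mul_le_mul_of_nonneg_left (key x (hsupp x h)) h.le
end

section
/- (Convexity of the minimal f-divergence to a mixture family.) Let Z be a finite nonempty set, let f: [0,∞) → ℝ be convex, and let Q_1, …, Q_n be probability distributions on Z, each with full support. Define, for a probability distribution P on Z, h(P) = min over weight vectors w in the probability simplex Δ_n of D_f(P ‖ Σ_{i=1}^n w_i Q_i), where D_f(P ‖ Q) = Σ_{z∈Z} Q(z) f(P(z)/Q(z)). Then h is a convex function of P on the probability simplex over Z. -/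
open scoped BigOperators

/-!
The f-divergence `D_f(P ‖ Q) = ∑_z Q(z) f(P(z)/Q(z))` is a sum of perspectives
`(x, a) ↦ a f(x/a)` of `f`, hence jointly convex in `(P, Q)`. Since `w ↦ ∑ᵢ wᵢ Qᵢ` is linear,
`D_f(P ‖ ∑ᵢ wᵢ Qᵢ)` is jointly convex in `(P, w)`, and minimising a jointly convex function over
one of its variables leaves a convex function of the other. Jensen's inequality bounds every
`D_f(P ‖ Q)` below by `f 1`, so the infima involved are genuine.
-/

open Set Matrix

theorem ConvexOn.perspective {s : Set ℝ} {f : ℝ → ℝ} (hf : ConvexOn ℝ s f) :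
    ConvexOn ℝ {x : ℝ × ℝ | 0 < x.2 ∧ x.1 / x.2 ∈ s} fun x => x.2 * f (x.1 / x.2) := by
  -- the ratio of a convex combination is a convex combination of the ratios
  have weights : ∀ ⦃x a y b u v : ℝ⦄, 0 < a → 0 < b → 0 ≤ u → 0 ≤ v → u + v = 1 →
      0 < u * a + v * b ∧ u * a / (u * a + v * b) + v * b / (u * a + v * b) = 1 ∧
      (u * x + v * y) / (u * a + v * b) =
        u * a / (u * a + v * b) * (x / a) + v * b / (u * a + v * b) * (y / b) := by
    intro x a y b u v ha hb hu hv huv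
    have hc : 0 < u * a + v * b := by
      nlinarith [lt_min ha hb, min_le_left a b, min_le_right a b]
    exact ⟨hc, by field_simp, by field_simp⟩
  refine ⟨?_, ?_⟩ <;>
    rintro ⟨x, a⟩ ⟨ha, hx⟩ ⟨y, b⟩ ⟨hb, hy⟩ u v hu hv huv <;>
    dsimp only at ha hb hx hy <;>
    obtain ⟨hc, hsum, hcomb⟩ := weights (x := x) (y := y) ha hb hu hv huv <;>
    simp only [mem_ofPred_eq, Prod.smul_mk, Prod.mk_add_mk, smul_eq_mul, hcomb]
  · exact ⟨hc, hf.1 hx hy (by positivity) (by positivity) hsum⟩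
  · refine (mul_le_mul_of_nonneg_left
      (hf.2 hx hy (by positivity) (by positivity) hsum) hc.le).trans_eq ?_
    simp only [smul_eq_mul]
    field_simp

noncomputable def fDiv {Z : Type*} [Fintype Z] (f : ℝ → ℝ) (p q : Z → ℝ) : ℝ :=
  ∑ z, q z * f (p z / q z)

section fDiv

variable {Z : Type*} [Fintype Z] {s : Set ℝ} {f : ℝ → ℝ}

theorem convexOn_fDiv (hf : ConvexOn ℝ s f) :
    ConvexOn ℝ {x : (Z → ℝ) × (Z → ℝ) | ∀ z, 0 < x.2 z ∧ x.1 z / x.2 z ∈ s}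
      fun x => fDiv f x.1 x.2 := by
  have hφ := hf.perspective
  refine ⟨fun x hx y hy u v hu hv huv z =>
    hφ.1 (x := (x.1 z, x.2 z)) (hx z) (y := (y.1 z, y.2 z)) (hy z) hu hv huv, ?_⟩
  intro x hx y hy u v hu hv huv
  simp only [fDiv, smul_eq_mul, Finset.mul_sum, ← Finset.sum_add_distrib]
  exact Finset.sum_le_sum fun z _ =>
    hφ.2 (x := (x.1 z, x.2 z)) (hx z) (y := (y.1 z, y.2 z)) (hy z) hu hv huv

theorem ConvexOn.le_fDiv (hf : ConvexOn ℝ s f) {p q : Z → ℝ} (hq : ∀ z, 0 < q z)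
    (hq₁ : ∑ z, q z = 1) (hs : ∀ z, p z / q z ∈ s) : f (∑ z, p z) ≤ fDiv f p q := by
  have := hf.map_sum_le (t := Finset.univ) (fun z _ => (hq z).le) hq₁ fun z _ => hs z
  simpa [fDiv, mul_div_cancel₀ _ (hq _).ne'] using this

end fDiv

theorem ConvexOn.sInf_image {E F : Type*} [AddCommGroup E] [Module ℝ E] [AddCommGroup F]
    [Module ℝ F] {s : Set E} {t : Set F} {g : E → F → ℝ} (hs : Convex ℝ s)
    (hg : ConvexOn ℝ (s ×ˢ t) fun x => g x.1 x.2) (hbdd : ∀ x ∈ s, BddBelow (g x '' t)) :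
    ConvexOn ℝ s fun x => sInf (g x '' t) := by
  rcases t.eq_empty_or_nonempty with rfl | ht
  · simpa using convexOn_const 0 hs
  refine ⟨hs, fun x hx y hy u v hu hv huv => le_of_forall_pos_le_add fun ε hε => ?_⟩
  obtain ⟨_, ⟨a, ha, rfl⟩, hga⟩ :=
    exists_lt_of_csInf_lt (ht.image (g x)) (lt_add_of_pos_right _ hε)
  obtain ⟨_, ⟨b, hb, rfl⟩, hgb⟩ :=
    exists_lt_of_csInf_lt (ht.image (g y)) (lt_add_of_pos_right _ hε)
  have hmem := hg.1 (mk_mem_prod hx ha) (mk_mem_prod hy hb) hu hv huv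
  calc sInf (g (u • x + v • y) '' t) ≤ g (u • x + v • y) (u • a + v • b) :=
        csInf_le (hbdd _ hmem.1) (mem_image_of_mem _ hmem.2)
    _ ≤ u • g x a + v • g y b := hg.2 (mk_mem_prod hx ha) (mk_mem_prod hy hb) hu hv huv
    _ ≤ u • (sInf (g x '' t) + ε) + v • (sInf (g y '' t) + ε) := by gcongr
    _ = u • sInf (g x '' t) + v • sInf (g y '' t) + ε := by
        simp only [smul_eq_mul]; linear_combination ε * huv

section mixture

variable {ι Z : Type*} [Fintype ι] {w : ι → ℝ} {Q : Matrix ι Z ℝ}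

theorem vecMul_mem_stdSimplex [Fintype Z] (hw : w ∈ stdSimplex ℝ ι)
    (hQ : ∀ i, Q i ∈ stdSimplex ℝ Z) : w ᵥ* Q ∈ stdSimplex ℝ Z := by
  rw [vecMul_eq_sum]
  exact (convex_stdSimplex ℝ Z).sum_mem (fun i _ => hw.1 i) hw.2 fun i _ => hQ i

theorem vecMul_apply_pos (hw : w ∈ stdSimplex ℝ ι) {z : Z} (hQ : ∀ i, 0 < Q i z) :
    0 < (w ᵥ* Q) z := by
  obtain ⟨i, -, hi⟩ := Finset.exists_lt_of_sum_lt (s := Finset.univ) (f := 0) (g := w)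
    (by simp [hw.2])
  exact Finset.sum_pos' (fun j _ => mul_nonneg (hw.1 j) (hQ j).le)
    ⟨i, Finset.mem_univ _, mul_pos hi (hQ i)⟩

end mixture

theorem min_f_divergence_convex_general
    {Z : Type*} [Fintype Z]
    (f : ℝ → ℝ) (hf : ConvexOn ℝ (Set.Ici (0:ℝ)) f)
    (n : ℕ)
    (Q : Fin n → Z → ℝ) (hQ : ∀ i, IsProb (Q i)) (hQpos : ∀ i z, 0 < Q i z) :
    ConvexOn ℝ (stdSimplex ℝ Z)
      (fun p : Z → ℝ =>
        sInf ((fun w : Fin n → ℝ =>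
          ∑ z, (∑ i, w i * Q i z) * f (p z / ∑ i, w i * Q i z)) ''
            stdSimplex ℝ (Fin n))) := by
  have hdom : ∀ p ∈ stdSimplex ℝ Z, ∀ w ∈ stdSimplex ℝ (Fin n),
      ∀ z, 0 < (w ᵥ* Q) z ∧ p z / (w ᵥ* Q) z ∈ Ici 0 := fun p hp w hw z =>
    have hpos := vecMul_apply_pos hw (hQpos · z)
    ⟨hpos, div_nonneg (hp.1 z) hpos.le⟩
  -- `w ᵥ* Q` unfolds to the mixture `fun z => ∑ i, w i * Q i z` of the statement
  have hjoint : ConvexOn ℝ (stdSimplex ℝ Z ×ˢ stdSimplex ℝ (Fin n))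
      fun x => fDiv f x.1 (x.2 ᵥ* Q) :=
    ((convexOn_fDiv hf).comp_linearMap (LinearMap.id.prodMap (vecMulLinear Q))).subset
      (fun x hx => hdom _ hx.1 _ hx.2) ((convex_stdSimplex ℝ Z).prod (convex_stdSimplex ℝ _))
  refine hjoint.sInf_image (convex_stdSimplex ℝ Z) fun p hp => ⟨f 1, ?_⟩
  rintro _ ⟨w, hw, rfl⟩
  calc f 1 = f (∑ z, p z) := by rw [hp.2]
    _ ≤ fDiv f p (w ᵥ* Q) := hf.le_fDiv (fun z => (hdom p hp w hw z).1)
        (vecMul_mem_stdSimplex hw hQ).2 fun z => (hdom p hp w hw z).2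

/-- **Convexity of the minimal f-divergence to a mixture family.**
For a finite nonempty set `Z`, a convex `f : [0,∞) → ℝ`, and full-support probability
distributions `Q₁, …, Qₙ` on `Z`, the function
`h(P) = min_{w ∈ Δₙ} D_f(P ‖ Σᵢ wᵢ Qᵢ)` is convex on the probability simplex over `Z`,
where `D_f(P‖Q) = Σ_z Q(z) f(P(z)/Q(z))`. -/
theorem min_f_divergence_convex
    {Z : Type*} [Fintype Z] [Nonempty Z]
    (f : ℝ → ℝ) (hf : ConvexOn ℝ (Set.Ici (0:ℝ)) f)
    (n : ℕ) (hn : 0 < n)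
    (Q : Fin n → Z → ℝ) (hQ : ∀ i, IsProb (Q i)) (hQpos : ∀ i z, 0 < Q i z) :
    ConvexOn ℝ (stdSimplex ℝ Z)
      (fun p : Z → ℝ =>
        sInf ((fun w : Fin n → ℝ =>
          ∑ z, (∑ i, w i * Q i z) * f (p z / ∑ i, w i * Q i z)) ''
            stdSimplex ℝ (Fin n))) :=
  min_f_divergence_convex_general f hf n Q hQ hQpos
end

section
/- (Sufficiency of the (Γ−1)-ambiguity set under bounded sensitivity.) Assume Supp(ρo) = Supp(ρe) and that there exists Γ ≥ 1 such that Γ^{-1} ≤ [ρo(x)(1−ρe(x))] / [ρe(x)(1−ρo(x))] ≤ Γ for all x ∈ Supp(ρe). Then for every policy π and every state–action pair (s,a), |d_{ρo}^π(s,a) − d_{ρe}^π(s,a)| ≤ Γ − 1. In particular, every value-maximizing policy π* belongs to its own (Γ−1)-ambiguity set Π₀^{Γ−1}(π*) = {π' deterministic : |d_{ρo}^{π'}(s,a) − d_{ρe}^{π*}(s,a)| < Γ−1 + η for all (s,a)} in the sense that |d_{ρo}^{π*}(s,a) − d_{ρe}^{π*}(s,a)| ≤ Γ − 1 for all (s,a).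 -/
open scoped BigOperators

section Aux

variable {S X A : Type*} [Fintype S] [Fintype X] [Fintype A]

lemma stateDist_prob (P : S → A → X → S → ℝ) (hP : ∀ s a x, IsProb (P s a x))
    (ν : X → S → ℝ) (hν : ∀ x, IsProb (ν x))
    (π : S → X → A → ℝ) (hπ : IsPolicy π) (x : X) :
    ∀ t, IsProb (stateDist P ν π x t) := by
  intro t
  induction t with
  | zero => exact hν x
  | succ t ih =>
    constructor
    · intro s'
      apply Finset.sum_nonneg; intro s _
      apply Finset.sum_nonneg; intro a _
      exact mul_nonneg (mul_nonneg (ih.1 s) ((hπ s x).1 a)) ((hP s a x).1 s')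
    · show ∑ s', ∑ s, ∑ a, stateDist P ν π x t s * π s x a * P s a x s' = 1
      rw [Finset.sum_comm]
      have : ∀ s, (∑ s', ∑ a, stateDist P ν π x t s * π s x a * P s a x s')
          = stateDist P ν π x t s := by
        intro s
        rw [Finset.sum_comm]
        have : ∀ a, (∑ s', stateDist P ν π x t s * π s x a * P s a x s')
            = stateDist P ν π x t s * π s x a := by
          intro a
          rw [← Finset.mul_sum, (hP s a x).2, mul_one]
        simp_rw [this, ← Finset.mul_sum, (hπ s x).2, mul_one]
      simp_rw [this, ih.2]

lemma dCtx_mem (γ : ℝ) (hγ : 0 < γ ∧ γ < 1)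
    (P : S → A → X → S → ℝ) (hP : ∀ s a x, IsProb (P s a x))
    (ν : X → S → ℝ) (hν : ∀ x, IsProb (ν x))
    (π : S → X → A → ℝ) (hπ : IsPolicy π) (x : X) (s : S) (a : A) :
    0 ≤ dCtx γ P ν π x s a ∧ dCtx γ P ν π x s a ≤ 1 := by
  have hprob := stateDist_prob P hP ν hν π hπ x
  have hterm0 : ∀ t : ℕ, 0 ≤ γ ^ t * (stateDist P ν π x t s * π s x a) := by
    intro t
    exact mul_nonneg (pow_nonneg hγ.1.le t)
      (mul_nonneg ((hprob t).1 s) ((hπ s x).1 a))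
  have hterm1 : ∀ t : ℕ, γ ^ t * (stateDist P ν π x t s * π s x a) ≤ γ ^ t := by
    intro t
    have hd1 : stateDist P ν π x t s ≤ 1 := by
      have := Finset.single_le_sum (f := stateDist P ν π x t)
        (fun i _ => (hprob t).1 i) (Finset.mem_univ s)
      rw [(hprob t).2] at this; exact this
    have hp1 : π s x a ≤ 1 := by
      have := Finset.single_le_sum (f := π s x)
        (fun i _ => (hπ s x).1 i) (Finset.mem_univ a)
      rw [(hπ s x).2] at this; exact this
    have : stateDist P ν π x t s * π s x a ≤ 1 :=
      mul_le_one₀ hd1 ((hπ s x).1 a) hp1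
    nlinarith [pow_nonneg hγ.1.le t]
  have hgsum : Summable (fun t : ℕ => γ ^ t) :=
    summable_geometric_of_lt_one hγ.1.le hγ.2
  have hsumm : Summable (fun t : ℕ => γ ^ t * (stateDist P ν π x t s * π s x a)) :=
    Summable.of_nonneg_of_le hterm0 hterm1 hgsum
  constructor
  · exact mul_nonneg (by linarith [hγ.2]) (tsum_nonneg hterm0)
  · have hle : (∑' t : ℕ, γ ^ t * (stateDist P ν π x t s * π s x a))
        ≤ ∑' t : ℕ, γ ^ t := Summable.tsum_le_tsum hterm1 hsumm hgsum
    rw [tsum_geometric_of_lt_one hγ.1.le hγ.2] at hle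
    have h1γ : 0 < 1 - γ := by linarith [hγ.2]
    calc dCtx γ P ν π x s a ≤ (1 - γ) * (1 - γ)⁻¹ :=
          mul_le_mul_of_nonneg_left hle h1γ.le
      _ = 1 := mul_inv_cancel₀ h1γ.ne'

end Aux

/-- **Sufficiency of the (Γ−1)-ambiguity set under bounded sensitivity.**
If `Supp(ρo) = Supp(ρe)` and the odds ratio between `ρo` and `ρe` is bounded in
`[Γ⁻¹, Γ]` on the support, then for every policy `π` and every `(s,a)`,
`|d_{ρo}^π(s,a) − d_{ρe}^π(s,a)| ≤ Γ − 1`; in particular this holds for every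
value-maximizing policy `π*`. -/

theorem bounded_sensitivity_ambiguity
    {S X A : Type*} [Fintype S] [Fintype X] [Fintype A]
    [Nonempty S] [Nonempty X] [Nonempty A]
    (γ : ℝ) (hγ : 0 < γ ∧ γ < 1)
    (P : S → A → X → S → ℝ) (hP : ∀ s a x, IsProb (P s a x))
    (ν : X → S → ℝ) (hν : ∀ x, IsProb (ν x))
    (ρo ρe : X → ℝ) (hρo : IsProb ρo) (hρe : IsProb ρe)
    (hsupp : ∀ x, 0 < ρo x ↔ 0 < ρe x)
    (Γ : ℝ) (hΓ : 1 ≤ Γ)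
    (hodds : ∀ x, 0 < ρe x →
      Γ⁻¹ ≤ ρo x * (1 - ρe x) / (ρe x * (1 - ρo x)) ∧
      ρo x * (1 - ρe x) / (ρe x * (1 - ρo x)) ≤ Γ) :
    (∀ π : S → X → A → ℝ, IsPolicy π →
      ∀ s a, |dMarg γ P ν ρo π s a - dMarg γ P ν ρe π s a| ≤ Γ - 1) ∧
    (∀ r : S → A → X → ℝ, ∀ πstar : S → X → A → ℝ, IsPolicy πstar →
      (∀ π' : S → X → A → ℝ, IsPolicy π' →
        val γ P ν ρo r π' ≤ val γ P ν ρo r πstar) →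
      ∀ s a, |dMarg γ P ν ρo πstar s a - dMarg γ P ν ρe πstar s a| ≤ Γ - 1) := by
  have hΓpos : 0 < Γ := by linarith
  -- pointwise bounds
  have key : ∀ x, ρo x - ρe x ≤ (Γ - 1) * ρe x ∧ ρe x - ρo x ≤ (Γ - 1) * ρo x := by
    intro x
    by_cases hex : 0 < ρe x
    · have hox : 0 < ρo x := (hsupp x).2 hex
      have ho1 : ρo x ≤ 1 := by
        have := Finset.single_le_sum (f := ρo) (fun i _ => hρo.1 i) (Finset.mem_univ x)
        rw [hρo.2] at this; exact this
      have he1 : ρe x ≤ 1 := by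
        have := Finset.single_le_sum (f := ρe) (fun i _ => hρe.1 i) (Finset.mem_univ x)
        rw [hρe.2] at this; exact this
      have holt : ρo x < 1 := by
        rcases lt_or_eq_of_le ho1 with h | h
        · exact h
        · exfalso
          have hd : ρe x * (1 - ρo x) = 0 := by rw [h]; ring
          have := (hodds x hex).1
          rw [hd, div_zero] at this
          have : (0:ℝ) < Γ⁻¹ := inv_pos.2 hΓpos
          linarith [(hodds x hex).1, hd ▸ (div_zero (ρo x * (1 - ρe x)))]
      have hden : 0 < ρe x * (1 - ρo x) := mul_pos hex (by linarith)
      have hub : ρo x * (1 - ρe x) ≤ Γ * (ρe x * (1 - ρo x)) :=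
        (div_le_iff₀ hden).1 (hodds x hex).2
      have hlb : ρe x * (1 - ρo x) ≤ Γ * (ρo x * (1 - ρe x)) := by
        have := (le_div_iff₀ hden).1 (hodds x hex).1
        have hΓi : Γ⁻¹ * Γ = 1 := inv_mul_cancel₀ hΓpos.ne'
        nlinarith
      constructor
      · nlinarith [mul_nonneg (mul_nonneg hex.le hox.le) (by linarith : (0:ℝ) ≤ Γ - 1)]
      · nlinarith [mul_nonneg (mul_nonneg hex.le hox.le) (by linarith : (0:ℝ) ≤ Γ - 1)]
    · have he0 : ρe x = 0 := le_antisymm (not_lt.1 hex) (hρe.1 x)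
      have ho0 : ρo x = 0 := by
        by_contra h
        exact hex ((hsupp x).1 (lt_of_le_of_ne (hρo.1 x) (Ne.symm h)))
      constructor <;> simp [he0, ho0]
  have main : ∀ π : S → X → A → ℝ, IsPolicy π →
      ∀ s a, |dMarg γ P ν ρo π s a - dMarg γ P ν ρe π s a| ≤ Γ - 1 := by
    intro π hπ s a
    have hc : ∀ x, 0 ≤ dCtx γ P ν π x s a ∧ dCtx γ P ν π x s a ≤ 1 :=
      fun x => dCtx_mem γ hγ P hP ν hν π hπ x s a
    rw [abs_le]
    unfold dMarg
    rw [← Finset.sum_sub_distrib]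
    constructor
    · rw [neg_le]
      rw [← Finset.sum_neg_distrib]
      calc (∑ x, -(ρo x * dCtx γ P ν π x s a - ρe x * dCtx γ P ν π x s a))
          ≤ ∑ x, (Γ - 1) * ρo x := by
            apply Finset.sum_le_sum
            intro x _
            have h1 := (key x).2
            have h2 := (hc x).1
            have h3 := (hc x).2
            have h4 := hρo.1 x
            nlinarith [mul_le_mul_of_nonneg_right h1 h2,
              mul_le_mul_of_nonneg_left h3 (mul_nonneg (by linarith : (0:ℝ) ≤ Γ - 1) h4)]
        _ = Γ - 1 := by rw [← Finset.mul_sum, hρo.2, mul_one]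
    · calc (∑ x, (ρo x * dCtx γ P ν π x s a - ρe x * dCtx γ P ν π x s a))
          ≤ ∑ x, (Γ - 1) * ρe x := by
            apply Finset.sum_le_sum
            intro x _
            have h1 := (key x).1
            have h2 := (hc x).1
            have h3 := (hc x).2
            have h4 := hρe.1 x
            nlinarith [mul_le_mul_of_nonneg_right h1 h2,
              mul_le_mul_of_nonneg_left h3 (mul_nonneg (by linarith : (0:ℝ) ≤ Γ - 1) h4)]
        _ = Γ - 1 := by rw [← Finset.mul_sum, hρe.2, mul_one]
  exact ⟨main, fun r πstar hπstar _ s a => main πstar hπstar s a⟩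
end
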